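/- For the two-degree-of-freedom TMD system, the quadratic cost J(ζ₂, κ) = ζ₂ε(4ζ₁²ζ₂κ + ζ₂(4ζ₁ζ₂ + ε) + ζ₁κ²(1+ε)) / (ζ₁ζ₂(4ζ₁ζ₂κ + 4ζ₂² + κ²) + ε²(ζ₁+ζ₂)(ζ₁κ² + ζ₂) + 2ζ₁ζ₂ε(κ(2ζ₁(ζ₁+ζ₂) − 1) + 2ζ₂(ζ₁+ζ₂) + κ²)) satisfies ∂J/∂κ = 0 at κ* = (ε + 2ζ₁ζ₂)/(1 + ε − 2ζ₁²), provided 1 + ε − 2ζ₁² ≠ 0 and the denominator of J is nonzero. -/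

import Mathlib

/-! The numerator of `J'` is the Wronskian `num' · den − num · den'` of two quadratics in `κ`, a
quadratic itself, and it factors as
`−2 ζ₁ ζ₂² ε² ((1 + ε − 2ζ₁²) κ − (ε + 2ζ₁ζ₂)) (ζ₁ κ + ζ₂)`; its first factor vanishes at `κ*`. -/

section Calculus

variable {𝕜 : Type*} [NontriviallyNormedField 𝕜]

theorem hasDerivAt_quadratic (a b c x : 𝕜) :
    HasDerivAt (fun y => a * y ^ 2 + b * y + c) (2 * a * x + b) x := by
  have h := (((hasDerivAt_pow 2 x).const_mul a).fun_add
    ((hasDerivAt_id' x).const_mul b)).add_const c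
  exact h.congr_deriv (by norm_num; ring)

theorem deriv_div_eq_zero_of_mul_sub_mul_eq_zero {f g : 𝕜 → 𝕜} {f' g' x : 𝕜}
    (hf : HasDerivAt f f' x) (hg : HasDerivAt g g' x) (hgx : g x ≠ 0)
    (h : f' * g x - f x * g' = 0) : deriv (fun y => f y / g y) x = 0 := by
  rw [(hf.fun_div hg hgx).deriv, h, zero_div]

end Calculus

section TMD

variable (ε ζ₁ ζ₂ : ℝ)

def tmdNum (κ : ℝ) : ℝ :=
  ζ₂ * ε * (4 * ζ₁ ^ 2 * ζ₂ * κ + ζ₂ * (4 * ζ₁ * ζ₂ + ε) + ζ₁ * κ ^ 2 * (1 + ε))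

def tmdDen (κ : ℝ) : ℝ :=
  ζ₁ * ζ₂ * (4 * ζ₁ * ζ₂ * κ + 4 * ζ₂ ^ 2 + κ ^ 2)
    + ε ^ 2 * (ζ₁ + ζ₂) * (ζ₁ * κ ^ 2 + ζ₂)
    + 2 * ζ₁ * ζ₂ * ε * (κ * (2 * ζ₁ * (ζ₁ + ζ₂) - 1) + 2 * ζ₂ * (ζ₁ + ζ₂) + κ ^ 2)

def tmdNumDeriv (κ : ℝ) : ℝ :=
  ζ₂ * ε * (4 * ζ₁ ^ 2 * ζ₂ + 2 * ζ₁ * (1 + ε) * κ)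

def tmdDenDeriv (κ : ℝ) : ℝ :=
  ζ₁ * ζ₂ * (4 * ζ₁ * ζ₂ + 2 * κ) + 2 * ε ^ 2 * (ζ₁ + ζ₂) * ζ₁ * κ
    + 2 * ζ₁ * ζ₂ * ε * (2 * ζ₁ * (ζ₁ + ζ₂) - 1 + 2 * κ)

theorem hasDerivAt_tmdNum (κ : ℝ) :
    HasDerivAt (tmdNum ε ζ₁ ζ₂) (tmdNumDeriv ε ζ₁ ζ₂ κ) κ := by
  have h := hasDerivAt_quadratic (ζ₂ * ε * ζ₁ * (1 + ε)) (4 * ζ₁ ^ 2 * ζ₂ ^ 2 * ε)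
    (ζ₂ ^ 2 * ε * (4 * ζ₁ * ζ₂ + ε)) κ
  rw [show (fun y => _) = tmdNum ε ζ₁ ζ₂ by funext y; unfold tmdNum; ring] at h
  exact h.congr_deriv (by unfold tmdNumDeriv; ring)

theorem hasDerivAt_tmdDen (κ : ℝ) :
    HasDerivAt (tmdDen ε ζ₁ ζ₂) (tmdDenDeriv ε ζ₁ ζ₂ κ) κ := by
  have h := hasDerivAt_quadratic (ζ₁ * ζ₂ + ε ^ 2 * (ζ₁ + ζ₂) * ζ₁ + 2 * ζ₁ * ζ₂ * ε)
    (4 * ζ₁ ^ 2 * ζ₂ ^ 2 + 2 * ζ₁ * ζ₂ * ε * (2 * ζ₁ * (ζ₁ + ζ₂) - 1))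
    (4 * ζ₁ * ζ₂ ^ 3 + ε ^ 2 * (ζ₁ + ζ₂) * ζ₂ + 4 * ζ₁ * ζ₂ ^ 2 * ε * (ζ₁ + ζ₂)) κ
  rw [show (fun y => _) = tmdDen ε ζ₁ ζ₂ by funext y; unfold tmdDen; ring] at h
  exact h.congr_deriv (by unfold tmdDenDeriv; ring)

theorem tmdNumDeriv_mul_tmdDen_sub (κ : ℝ) :
    tmdNumDeriv ε ζ₁ ζ₂ κ * tmdDen ε ζ₁ ζ₂ κ - tmdNum ε ζ₁ ζ₂ κ * tmdDenDeriv ε ζ₁ ζ₂ κ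
      = -2 * ζ₁ * ζ₂ ^ 2 * ε ^ 2 * ((1 + ε - 2 * ζ₁ ^ 2) * κ - (ε + 2 * ζ₁ * ζ₂))
        * (ζ₁ * κ + ζ₂) := by
  unfold tmdNumDeriv tmdDen tmdNum tmdDenDeriv
  ring

end TMD

theorem stmt_4_general (ε ζ₁ ζ₂ : ℝ)
    (num den J : ℝ → ℝ)
    (hnum : num = fun κ => ζ₂ * ε * (4 * ζ₁ ^ 2 * ζ₂ * κ + ζ₂ * (4 * ζ₁ * ζ₂ + ε)
      + ζ₁ * κ ^ 2 * (1 + ε)))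
    (hden : den = fun κ => ζ₁ * ζ₂ * (4 * ζ₁ * ζ₂ * κ + 4 * ζ₂ ^ 2 + κ ^ 2)
      + ε ^ 2 * (ζ₁ + ζ₂) * (ζ₁ * κ ^ 2 + ζ₂)
      + 2 * ζ₁ * ζ₂ * ε * (κ * (2 * ζ₁ * (ζ₁ + ζ₂) - 1) + 2 * ζ₂ * (ζ₁ + ζ₂) + κ ^ 2))
    (hJ : J = fun κ => num κ / den κ)
    (κstar : ℝ) (hκstar : κstar = (ε + 2 * ζ₁ * ζ₂) / (1 + ε - 2 * ζ₁ ^ 2))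
    (h1 : 1 + ε - 2 * ζ₁ ^ 2 ≠ 0) (h2 : den κstar ≠ 0) :
    deriv J κstar = 0 := by
  have hk : (1 + ε - 2 * ζ₁ ^ 2) * κstar = ε + 2 * ζ₁ * ζ₂ := by
    rw [hκstar, mul_div_cancel₀ _ h1]
  change num = tmdNum ε ζ₁ ζ₂ at hnum
  change den = tmdDen ε ζ₁ ζ₂ at hden
  subst hJ hnum hden
  refine deriv_div_eq_zero_of_mul_sub_mul_eq_zero (hasDerivAt_tmdNum ε ζ₁ ζ₂ κstar)
    (hasDerivAt_tmdDen ε ζ₁ ζ₂ κstar) h2 ?_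
  rw [tmdNumDeriv_mul_tmdDen_sub, hk, sub_self, mul_zero, zero_mul]

/-- For the two-degree-of-freedom TMD cost
`J(ζ₂, κ) = ζ₂ ε (4ζ₁²ζ₂κ + ζ₂(4ζ₁ζ₂ + ε) + ζ₁κ²(1+ε)) / D(κ)`,
the stationarity condition `∂J/∂κ = 0` holds at `κ* = (ε + 2ζ₁ζ₂)/(1 + ε − 2ζ₁²)`,
provided `1 + ε − 2ζ₁² ≠ 0` and the denominator of `J` is nonzero at `κ*`. -/
theorem stmt_4 (ε ζ₁ ζ₂ : ℝ) (hε : 0 < ε) (hζ₁ : 0 < ζ₁) (hζ₂ : 0 < ζ₂)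
    (num den J : ℝ → ℝ)
    (hnum : num = fun κ => ζ₂ * ε * (4 * ζ₁ ^ 2 * ζ₂ * κ + ζ₂ * (4 * ζ₁ * ζ₂ + ε)
      + ζ₁ * κ ^ 2 * (1 + ε)))
    (hden : den = fun κ => ζ₁ * ζ₂ * (4 * ζ₁ * ζ₂ * κ + 4 * ζ₂ ^ 2 + κ ^ 2)
      + ε ^ 2 * (ζ₁ + ζ₂) * (ζ₁ * κ ^ 2 + ζ₂)
      + 2 * ζ₁ * ζ₂ * ε * (κ * (2 * ζ₁ * (ζ₁ + ζ₂) - 1) + 2 * ζ₂ * (ζ₁ + ζ₂) + κ ^ 2))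
    (hJ : J = fun κ => num κ / den κ)
    (κstar : ℝ) (hκstar : κstar = (ε + 2 * ζ₁ * ζ₂) / (1 + ε - 2 * ζ₁ ^ 2))
    (h1 : 1 + ε - 2 * ζ₁ ^ 2 ≠ 0) (h2 : den κstar ≠ 0) :
    deriv J κstar = 0 :=
  stmt_4_general ε ζ₁ ζ₂ num den J hnum hden hJ κstar hκstar h1 h2
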